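/- Let k be a finite field with q elements and r ∈ k^× a nonzero element. For every integer l ≥ 0, the cardinalities of the sets of length-l words satisfy |A_r^{l+1}| + |A_r^l| = q^l, and |A_r^0| = 0. -/

import Mathlib

/-!
Appending a letter `x` to `w` multiplies `π w = [[a, b], [c, d]]` on the right by
`[[0, 1], [-1, x]]`, so the new right column is `(a + b x, c + d x)`. Using `a d - b c = 1`,
one checks that `w ++ [x] ∈ A_r` exactly when `w ∉ A_r` and `x` solves the linear equation
`c + d x = (a + b x) r`, whose leading coefficient `d - b r` is then nonzero. So dropping the last
letter is a bijection `A_r^(l+1) ≃ C_r^l`, and `|C_r^l| + |A_r^l| = q^l`; also `π ε = 1 ∉ A_r`.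
-/

/-- The monoid homomorphism π sending a word α₁…α_l over k to the matrix product
[[0,1],[−1,α₁]] ⋯ [[0,1],[−1,α_l]]. -/
def piWord {k : Type*} [Field k] (w : List k) : Matrix (Fin 2) (Fin 2) k :=
  (w.map fun α => !![0, 1; -1, α]).prod

/-- A_r : words w with π(w) = [[a,b],[c,d]] satisfying d = b·r and b ≠ 0. -/
def Ar {k : Type*} [Field k] (r : k) : Set (List k) :=
  {w | piWord w 1 1 = piWord w 0 1 * r ∧ piWord w 0 1 ≠ 0}

/-- Number of words of length l lying in A_r. -/
noncomputable def cardArl {k : Type*} [Field k] (r : k) (l : ℕ) : ℕ :=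
  Nat.card {w : List k // w.length = l ∧ w ∈ Ar r}

namespace List

variable {α : Type*}

theorem card_length_eq_and_add_card_length_eq_and_not [Fintype α] (p : List α → Prop) (l : ℕ) :
    Nat.card {w : List α // w.length = l ∧ p w} + Nat.card {w : List α // w.length = l ∧ ¬p w} =
      Fintype.card α ^ l := by
  classical
  have vectorEquiv (q : List α → Prop) :
      {v : Vector α l // q v.1} ≃ {w : List α // w.length = l ∧ q w} :=
    Equiv.subtypeSubtypeEquivSubtypeInter _ q
  rw [← Nat.card_congr (vectorEquiv p), ← Nat.card_congr (vectorEquiv fun w => ¬p w),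
    ← Nat.card_sum, Nat.card_congr (Equiv.sumCompl _), Nat.card_eq_fintype_card, card_vector]

def lengthSuccMemEquivLengthNotMem (S : Set (List α)) (f : List α → α)
    (hS : ∀ w a, w ++ [a] ∈ S ↔ w ∉ S ∧ a = f w) (l : ℕ) :
    {w : List α // w.length = l + 1 ∧ w ∈ S} ≃ {w : List α // w.length = l ∧ w ∉ S} where
  toFun w := ⟨w.1.dropLast, by
    obtain ⟨w, hl, hw⟩ := w
    obtain ⟨v, a, rfl⟩ := (eq_nil_or_concat' w).resolve_left (ne_nil_of_length_eq_add_one hl)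
    rw [dropLast_concat]
    exact ⟨by simpa using hl, ((hS v a).1 hw).1⟩⟩
  invFun w := ⟨w.1 ++ [f w.1], by simp [w.2.1], (hS _ _).2 ⟨w.2.2, rfl⟩⟩
  left_inv := by
    rintro ⟨w, hl, hw⟩
    obtain ⟨v, a, rfl⟩ := (eq_nil_or_concat' w).resolve_left (ne_nil_of_length_eq_add_one hl)
    simp [((hS v a).1 hw).2]
  right_inv w := by simp

theorem card_length_succ_add_card_length [Fintype α] (S : Set (List α)) (f : List α → α)
    (hS : ∀ w a, w ++ [a] ∈ S ↔ w ∉ S ∧ a = f w) (l : ℕ) :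
    Nat.card {w : List α // w.length = l + 1 ∧ w ∈ S} +
      Nat.card {w : List α // w.length = l ∧ w ∈ S} = Fintype.card α ^ l := by
  rw [Nat.card_congr (lengthSuccMemEquivLengthNotMem S f hS l), add_comm]
  exact card_length_eq_and_add_card_length_eq_and_not (· ∈ S) l

end List

section

variable {k : Type*} [Field k]

theorem append_letter_mem_condition_iff {a b c d r x : k} (hdet : a * d - b * c = 1) :
    (c + d * x = (a + b * x) * r ∧ a + b * x ≠ 0) ↔
      ¬(d = b * r ∧ b ≠ 0) ∧ x = (a * r - c) / (d - b * r) := by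
  have hlin : c + d * x = (a + b * x) * r ↔ x * (d - b * r) = a * r - c := by
    constructor <;> intro h <;> linear_combination h
  rw [hlin]
  constructor
  · rintro ⟨h, -⟩
    have he : d - b * r ≠ 0 := by
      intro he
      have : (1 : k) = 0 := by linear_combination -hdet + (a + b * x) * he - b * h
      exact one_ne_zero this
    exact ⟨fun hd => he (sub_eq_zero.2 hd.1), (eq_div_iff he).2 h⟩
  · rintro ⟨hw, hx⟩
    have he : d - b * r ≠ 0 := by
      intro he
      have hb : b = 0 := by_contra fun hb => hw ⟨sub_eq_zero.1 he, hb⟩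
      have : (1 : k) = 0 := by linear_combination -hdet + a * he + (a * r - c) * hb
      exact one_ne_zero this
    have h : x * (d - b * r) = a * r - c := (eq_div_iff he).1 hx
    refine ⟨h, fun h0 => ?_⟩
    have : (1 : k) = 0 := by linear_combination -hdet + (d - b * r) * h0 - b * h
    exact one_ne_zero this

theorem piWord_append_singleton (w : List k) (x : k) :
    piWord (w ++ [x]) = piWord w * !![0, 1; -1, x] := by
  simp [piWord]

theorem det_piWord (w : List k) : (piWord w).det = 1 := by
  induction w with
  | nil => simp [piWord]
  | cons x w ih =>
    rw [piWord, List.map_cons, List.prod_cons, Matrix.det_mul, ← piWord, ih]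
    simp [Matrix.det_fin_two_of]

theorem nil_not_mem_Ar (r : k) : [] ∉ Ar r := by
  simp [Ar, piWord]

/-- The unique letter `x` with `w ++ [x] ∈ Ar r`, when `w ∉ Ar r`. -/
noncomputable def completingLetter (r : k) (w : List k) : k :=
  (piWord w 0 0 * r - piWord w 1 0) / (piWord w 1 1 - piWord w 0 1 * r)

theorem append_singleton_mem_Ar_iff (r : k) (w : List k) (x : k) :
    w ++ [x] ∈ Ar r ↔ w ∉ Ar r ∧ x = completingLetter r w := by
  have hdet := det_piWord w
  rw [Matrix.det_fin_two] at hdet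
  simpa [Ar, piWord_append_singleton, Matrix.mul_apply, Fin.sum_univ_two, completingLetter]
    using append_letter_mem_condition_iff hdet

end

theorem stmt4_general {k : Type*} [Field k] [Fintype k] (r : k) :
    (∀ l : ℕ, cardArl r (l + 1) + cardArl r l = (Fintype.card k) ^ l) ∧
    cardArl r 0 = 0 := by
  refine ⟨List.card_length_succ_add_card_length (Ar r) (completingLetter r)
    (append_singleton_mem_Ar_iff r), ?_⟩
  have : IsEmpty {w : List k // w.length = 0 ∧ w ∈ Ar r} :=
    ⟨fun ⟨w, hl, hw⟩ => nil_not_mem_Ar r (List.length_eq_zero_iff.1 hl ▸ hw)⟩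
  exact Nat.card_of_isEmpty

theorem stmt4 {k : Type*} [Field k] [Fintype k] (r : k) (hr : r ≠ 0) :
    (∀ l : ℕ, cardArl r (l + 1) + cardArl r l = (Fintype.card k) ^ l) ∧
    cardArl r 0 = 0 :=
  stmt4_general r
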